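/- Let V be the two-ended-stack value function: V([]) = 0 and V(l) = max(head(l) − V(tail(l)), last(l) − V(init(l))) for nonempty l. Define the cycle value W(a_1, …, a_n) = max_{1 ≤ i ≤ n} (a_i − V(a_{i+1}, …, a_n, a_1, …, a_{i−1})). If n is even, then W(a_1, …, a_n) ≥ 0 for every sequence (a_1, …, a_n). -/

import Mathlib

/-- The value of the two-ended stack game: the player to move takes the left or right
end, maximizing own total minus opponent's. -/
noncomputable def tesVal : List ℝ → ℝ
  | [] => 0
  | a :: l =>
      max (a - tesVal l)
        ((a :: l).getLast (List.cons_ne_nil a l) - tesVal ((a :: l).dropLast))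
  termination_by l => l.length
  decreasing_by
  · simp
  · simp [List.length_dropLast]

/-- The value of the cycle game: the first player removes any vertex, after which the
game is the two-ended stack on the remaining arc. -/
noncomputable def cycVal (a : List ℝ) : ℝ :=
  (((List.range a.length).map fun i =>
      a.getD i 0 - tesVal ((a.rotate i).tail)).maximum).unbotD 0

/-! The player to move in a two-ended stack of even length can take every entry of one parity
class, so the value is at least the absolute alternating sum; from an odd stack every move hands
the opponent an even stack, so the value is at most the alternating sum. On an even cycle,
removing vertex 0 or vertex 1 leaves odd arcs, and the two payoffs are then bounded below by the
difference of the two color classes and by its negative. -/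

namespace List

variable {G : Type*} [AddCommGroup G]

theorem alternatingSum_concat_of_even {l : List G} (hl : Even l.length) (x : G) :
    (l ++ [x]).alternatingSum = l.alternatingSum + x := by
  simp [alternatingSum_append, hl.neg_one_pow]

theorem alternatingSum_concat_of_odd {l : List G} (hl : Odd l.length) (x : G) :
    (l ++ [x]).alternatingSum = l.alternatingSum - x := by
  simp [alternatingSum_append, hl.neg_one_pow, sub_eq_add_neg]

end List

theorem tesVal_eq_max {a x : ℝ} {t d : List ℝ} (h : a :: t = d ++ [x]) :
    tesVal (a :: t) = max (a - tesVal t) (x - tesVal d) := by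
  rw [tesVal]
  congr
  · simp [h]
  · rw [h, List.dropLast_concat]

theorem sub_tesVal_le_tesVal_cons (a : ℝ) (t : List ℝ) : a - tesVal t ≤ tesVal (a :: t) := by
  rw [tesVal]; exact le_max_left _ _

theorem sub_tesVal_le_tesVal_concat (d : List ℝ) (x : ℝ) :
    x - tesVal d ≤ tesVal (d ++ [x]) := by
  obtain ⟨a, t, h⟩ := List.exists_cons_of_ne_nil (List.concat_ne_nil x d)
  rw [h, tesVal_eq_max h.symm]; exact le_max_right _ _

mutual

theorem tesVal_le_alternatingSum_of_odd :
    ∀ l : List ℝ, Odd l.length → tesVal l ≤ l.alternatingSum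
  | [], h => by simp at h
  | a :: t, h => by
    obtain ⟨d, x, hdx⟩ := (List.eq_nil_or_concat' (a :: t)).resolve_left (List.cons_ne_nil a t)
    have ht : Even t.length := by simpa [Nat.odd_add_one] using h
    have hd : Even d.length := by simpa [hdx, Nat.odd_add_one] using h
    have := abs_le.1 (abs_alternatingSum_le_tesVal_of_even t ht)
    have := abs_le.1 (abs_alternatingSum_le_tesVal_of_even d hd)
    rw [tesVal_eq_max hdx]
    refine max_le ?_ ?_
    · rw [List.alternatingSum_cons]; linarith
    · rw [hdx, List.alternatingSum_concat_of_even hd]; linarith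
termination_by l _ => l.length
decreasing_by all_goals grind

theorem abs_alternatingSum_le_tesVal_of_even :
    ∀ l : List ℝ, Even l.length → |l.alternatingSum| ≤ tesVal l
  | [], _ => by simp [tesVal]
  | a :: t, h => by
    obtain ⟨d, x, hdx⟩ := (List.eq_nil_or_concat' (a :: t)).resolve_left (List.cons_ne_nil a t)
    have ht : Odd t.length := by simpa [Nat.even_add_one] using h
    have hd : Odd d.length := by simpa [hdx, Nat.even_add_one] using h
    rw [abs_le]
    constructor
    · rw [hdx, List.alternatingSum_concat_of_odd hd]
      linarith [sub_tesVal_le_tesVal_concat d x, tesVal_le_alternatingSum_of_odd d hd]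
    · rw [List.alternatingSum_cons]
      linarith [sub_tesVal_le_tesVal_cons a t, tesVal_le_alternatingSum_of_odd t ht]
termination_by l _ => l.length
decreasing_by all_goals grind

end

theorem sub_tesVal_rotate_le_cycVal (a : List ℝ) {i : ℕ} (hi : i < a.length) :
    a.getD i 0 - tesVal (a.rotate i).tail ≤ cycVal a :=
  WithBot.le_unbotD <| List.le_maximum_of_mem' <|
    List.mem_map_of_mem (List.mem_range.2 hi)

theorem sub_alternatingSum_rotate_le_cycVal {a : List ℝ} (h : Even a.length) {i : ℕ}
    (hi : i < a.length) : a.getD i 0 - (a.rotate i).tail.alternatingSum ≤ cycVal a := by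
  have harc : Odd (a.rotate i).tail.length := by
    rw [List.length_tail, List.length_rotate]
    exact Nat.Even.sub_odd (by omega) h odd_one
  linarith [sub_tesVal_rotate_le_cycVal a hi, tesVal_le_alternatingSum_of_odd _ harc]

/-- Every even cycle game has nonnegative value (color strategy). -/
theorem cycVal_nonneg_of_even (a : List ℝ) (h : Even a.length) :
    0 ≤ cycVal a := by
  match a, h with
  | [], _ => simp [cycVal]
  | [_], h => simp at h
  | x :: y :: t, h =>
    have ht : Even t.length := by simpa [Nat.even_add_one] using h
    have h0 := sub_alternatingSum_rotate_le_cycVal h (i := 0) (by simp)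
    have h1 := sub_alternatingSum_rotate_le_cycVal h (i := 1) (by simp)
    simp only [List.rotate_zero, List.rotate_cons_succ, List.cons_append, List.tail_cons,
      List.getD_cons_zero, List.getD_cons_succ, List.alternatingSum_cons,
      List.alternatingSum_concat_of_even ht] at h0 h1
    linarith
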